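/- For all i ≥ 1, P_{2i+1}(u)·P_{2i+3}(u) − P_{2i+1}(u) − P_{2i+3}(u) < P_{4i+3}(u); consequently, writing g(a,b) = ab − a − b for the 2-variable Frobenius number of coprime a,b, one has g(P_{2i+1}(u), P_{2i+3}(u)) < P_{4i+3}(u). -/

import Mathlib

/-!
By the addition formula `P_{m+n+1} = P_{m+1} P_{n+1} + P_m P_n`, the number `P_{4i+3}` equals
`P_{2i+1} P_{2i+3} + P_{2i} P_{2i+2} ≥ P_{2i+1} P_{2i+3}`, and odd-indexed terms are at least `1`,
so subtracting `P_{2i+1} + P_{2i+3}` from the product lands strictly below `P_{4i+3}`.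
-/

def pell (u : ℕ) : ℕ → ℕ
  | 0 => 0
  | 1 => 1
  | n + 2 => u * pell u (n + 1) + pell u n

lemma pell_add_two (u n : ℕ) : pell u (n + 2) = u * pell u (n + 1) + pell u n := rfl

lemma pell_add (u m n : ℕ) :
    pell u (m + n + 1) = pell u (m + 1) * pell u (n + 1) + pell u m * pell u n := by
  induction m using Nat.twoStepInduction generalizing n with
  | zero => simp [pell]
  | one => rw [show 1 + n + 1 = n + 2 by ring, pell_add_two]; simp [pell]
  | more m ih₁ ih₂ =>
    rw [show m + 2 + n + 1 = (m + n + 1) + 2 by ring, pell_add_two,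
      show m + n + 1 + 1 = (m + 1) + n + 1 by ring, ih₂ n, ih₁ n,
      pell_add_two u (m + 1), pell_add_two u m]
    ring

lemma pell_four_mul_add_three (u i : ℕ) :
    pell u (4 * i + 3) = pell u (2 * i + 1) * pell u (2 * i + 3)
      + pell u (2 * i) * pell u (2 * i + 2) := by
  rw [show 4 * i + 3 = 2 * i + (2 * i + 2) + 1 by ring, pell_add]

lemma one_le_pell_odd (u n : ℕ) : 1 ≤ pell u (2 * n + 1) := by
  induction n with
  | zero => simp [pell]
  | succ n ih =>
    rw [show 2 * (n + 1) + 1 = 2 * n + 1 + 2 by ring, pell_add_two]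
    omega

theorem stmt_7_general (u : ℕ) (i : ℕ) :
    (pell u (2 * i + 1) * pell u (2 * i + 3) : ℤ) - pell u (2 * i + 1) - pell u (2 * i + 3)
      < pell u (4 * i + 3) := by
  have h₁ : (1 : ℤ) ≤ pell u (2 * i + 1) := by exact_mod_cast one_le_pell_odd u i
  have h₃ : (0 : ℤ) ≤ pell u (2 * i + 3) := by positivity
  have h₀ : (0 : ℤ) ≤ pell u (2 * i) * pell u (2 * i + 2) := by positivity
  rw [pell_four_mul_add_three]
  push_cast
  linarith

theorem stmt_7 (u : ℕ) (hu : 1 ≤ u) (i : ℕ) (hi : 1 ≤ i) :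
    (pell u (2 * i + 1) * pell u (2 * i + 3) : ℤ) - pell u (2 * i + 1) - pell u (2 * i + 3)
      < pell u (4 * i + 3) :=
  stmt_7_general u i
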